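/- For all reals a, b, c, d, all 1 ≤ k, l ≤ N, and every x ∈ ℤ, the series ∑_{y∈ℤ} T_{c,d}(x,y) · F_{k,l}(y,a,b) converges absolutely, and its sum equals F_{k,l}(x, a+c, b+d). -/

import Mathlib

open Complex MeasureTheory
open scoped Real

/-- `F N v k l x a b r` is the contour integral
`(1/(2πi)) ∮_{|z|=r} z^{x−1} e^{bz + a/z}
  (∏_{i=1}^{k−1} (1 − v_{N+1−i} z)) / (∏_{j=1}^{l−1} (1 − v_{N+1−j} z)) dz`. -/
noncomputable def F (N : ℕ) (v : ℕ → ℝ) (k l : ℕ) (x : ℤ) (a b r : ℝ) : ℂ :=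
  (2 * (Real.pi : ℂ) * Complex.I)⁻¹ *
    ∮ z in C(0, r), z ^ (x - 1) * Complex.exp ((b : ℂ) * z + (a : ℂ) / z) *
      (∏ i ∈ Finset.range (k - 1), (1 - (v (N - i) : ℂ) * z)) /
      ∏ j ∈ Finset.range (l - 1), (1 - (v (N - j) : ℂ) * z)

/-- `T_{c,d}(x,y) = (1/(2πi)) ∮_{|w|=r'} w^{x−y−1} e^{c/w + dw} dw`. -/
noncomputable def T (c d : ℝ) (x y : ℤ) (r' : ℝ) : ℂ :=
  (2 * (Real.pi : ℂ) * Complex.I)⁻¹ *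
    ∮ w in C(0, r'), w ^ (x - y - 1) * Complex.exp ((c : ℂ) / w + (d : ℂ) * w)

/-!
The function `e^{c/w + dw}` has on `ℂ \ {0}` the absolutely convergent Laurent expansion
`∑ₖ τₖ wᵏ` with `τₖ = ∑ᵢ cⁱ d^{k+i} / (i! (k+i)!)`, obtained by multiplying the series of
`e^{c/w}` and `e^{dw}`. Integrating it termwise over a circle picks out one coefficient, so
`T_{c,d}(x,y) = τ_{y-x}` for every radius, hence `∑_y T_{c,d}(x,y) z^{y-1} = z^{x-1} e^{c/z + dz}`,
absolutely and uniformly on `|z| = r`. Summing under the contour integral defining `F_{k,l}(y,a,b)`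
therefore multiplies its integrand `z^{y-1} e^{bz + a/z} ∏/∏` by `e^{c/z + dz}`.
-/

open Metric
open scoped Nat

theorem ne_zero_of_mem_sphere_zero {E : Type*} [SeminormedAddGroup E] {R : ℝ} (hR : R ≠ 0)
    {z : E} (hz : z ∈ sphere (0 : E) R) : z ≠ 0 :=
  ne_zero_of_mem_sphere hR ⟨z, hz⟩

theorem continuousOn_zpow_sphere {R : ℝ} (hR : R ≠ 0) (n : ℤ) :
    ContinuousOn (fun z : ℂ => z ^ n) (sphere 0 R) :=
  fun z hz => (continuousAt_zpow₀ z n (.inl (ne_zero_of_mem_sphere_zero hR hz))).continuousWithinAt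

theorem circleIntegral_zpow {R : ℝ} (hR : 0 < R) (n : ℤ) :
    (∮ z in C(0, R), z ^ n) = if n = -1 then 2 * π * I else 0 := by
  split_ifs with h
  · simpa [h, zpow_neg_one] using
      circleIntegral.integral_sub_inv_of_mem_ball (mem_ball_self hR (x := (0 : ℂ)))
  · simpa using circleIntegral.integral_sub_zpow_of_ne h 0 0 R

theorem hasSum_circleIntegral {E : Type*} [NormedAddCommGroup E] [NormedSpace ℂ E]
    {ι : Type*} [Countable ι] {c : ℂ} {R : ℝ} (hR : 0 ≤ R)
    {f : ι → ℂ → E} {g : ℂ → E} {B : ι → ℝ} (hf : ∀ i, ContinuousOn (f i) (sphere c R))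
    (hB : Summable B) (hfB : ∀ i, ∀ z ∈ sphere c R, ‖f i z‖ ≤ B i)
    (hfg : ∀ z ∈ sphere c R, HasSum (fun i => f i z) (g z)) :
    HasSum (fun i => ∮ z in C(c, R), f i z) (∮ z in C(c, R), g z) := by
  have hmem := circleMap_mem_sphere c hR
  refine intervalIntegral.hasSum_integral_of_dominated_convergence (fun i _ => R * B i)
    (fun i => ?_) (fun i => .of_forall fun θ _ => ?_) (.of_forall fun _ _ => hB.mul_left R)
    intervalIntegrable_const (.of_forall fun θ _ => (hfg _ (hmem θ)).const_smul _)
  · simp only [deriv_circleMap]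
    exact (((continuous_circleMap 0 R).mul continuous_const).smul
      ((hf i).comp_continuous (continuous_circleMap c R) hmem)).aestronglyMeasurable
  · simp only [deriv_circleMap, norm_smul, norm_mul, norm_circleMap_zero, norm_I, mul_one,
      abs_of_nonneg hR]
    exact mul_le_mul_of_nonneg_left (hfB i _ (hmem θ)) hR

theorem circleIntegral_zpow_mul_of_hasSum {a : ℤ → ℂ} {f : ℂ → ℂ} {R : ℝ} (hR : 0 < R)
    (ha : Summable fun n => ‖a n‖ * R ^ n)
    (hf : ∀ w ∈ sphere (0 : ℂ) R, HasSum (fun n => a n * w ^ n) (f w)) (m : ℤ) :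
    (∮ w in C(0, R), w ^ m * f w) = 2 * π * I * a (-m - 1) := by
  have hbound : ∀ n, ∀ w ∈ sphere (0 : ℂ) R, ‖w ^ m * (a n * w ^ n)‖ ≤ R ^ m * (‖a n‖ * R ^ n) := by
    intro n w hw
    rw [mem_sphere_zero_iff_norm] at hw
    rw [norm_mul, norm_mul, norm_zpow, norm_zpow, hw]
  have hterm : ∀ n, (∮ w in C(0, R), w ^ m * (a n * w ^ n))
      = if n = -m - 1 then 2 * π * I * a (-m - 1) else 0 := by
    intro n
    rw [circleIntegral.integral_congr hR.le (g := fun w => a n * w ^ (m + n)),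
      circleIntegral.integral_const_mul, circleIntegral_zpow hR]
    · by_cases h : n = -m - 1
      · simp [h, mul_comm, show m + (-m - 1) = -1 by ring]
      · simp [h, show m + n ≠ -1 by omega]
    · intro w hw
      simp only [zpow_add₀ (ne_zero_of_mem_sphere_zero hR.ne' hw)]
      ring
  have hsum := hasSum_circleIntegral (f := fun n w => w ^ m * (a n * w ^ n)) hR.le
    (fun n => (continuousOn_zpow_sphere hR.ne' m).mul
      (continuousOn_const.mul (continuousOn_zpow_sphere hR.ne' n)))
    (ha.mul_left (R ^ m)) hbound (fun w hw => (hf w hw).mul_left (w ^ m))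
  simp only [hterm] at hsum
  exact hsum.unique (hasSum_ite_eq _ _)

noncomputable def expCoeff (c : ℂ) (n : ℤ) : ℂ :=
  if 0 ≤ n then c ^ n.toNat / n.toNat ! else 0

theorem expCoeff_eq_zero_of_notMem_range {c : ℂ} {n : ℤ} (hn : n ∉ Set.range ((↑) : ℕ → ℤ)) :
    expCoeff c n = 0 :=
  if_neg fun h => hn ⟨n.toNat, Int.toNat_of_nonneg h⟩

theorem hasSum_expCoeff_mul_zpow (c z : ℂ) :
    HasSum (fun n : ℤ => expCoeff c n * z ^ n) (exp (c * z)) := by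
  refine (Nat.cast_injective.hasSum_iff fun n hn => ?_).mp ?_
  · rw [expCoeff_eq_zero_of_notMem_range hn, zero_mul]
  · have h : HasSum (fun n : ℕ => (c * z) ^ n / n !) (exp (c * z)) := by
      rw [exp_eq_exp_ℂ]
      exact NormedSpace.expSeries_div_hasSum_exp (c * z)
    convert h using 2 with n
    simp [expCoeff, mul_pow, div_mul_eq_mul_div]

theorem summable_norm_expCoeff_mul_zpow (c z : ℂ) :
    Summable fun n : ℤ => ‖expCoeff c n * z ^ n‖ := by
  refine (Nat.cast_injective.summable_iff fun n hn => ?_).mp ?_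
  · rw [expCoeff_eq_zero_of_notMem_range hn, zero_mul, norm_zero]
  · convert NormedSpace.norm_expSeries_div_summable (c * z) using 2 with n
    simp [expCoeff, mul_pow, div_mul_eq_mul_div]

def shearEquiv : ℤ × ℤ ≃ ℤ × ℤ :=
  (Equiv.prodComm ℤ ℤ).trans (Equiv.prodShear (Equiv.refl ℤ) Equiv.addRight)

/-- The term `(c/z)^i/i! · (dz)^(k+i)/(k+i)!` of the product of the series of `exp (c / z)` and
`exp (d * z)`, indexed by `(k, i)` so that `k` is the total power of `z`. -/
noncomputable def expLaurentTerm (c d z : ℂ) (p : ℤ × ℤ) : ℂ :=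
  expCoeff c p.2 * z⁻¹ ^ p.2 * (expCoeff d (p.1 + p.2) * z ^ (p.1 + p.2))

noncomputable def expLaurentCoeff (c d : ℂ) (k : ℤ) : ℂ :=
  ∑' i : ℤ, expCoeff c i * expCoeff d (k + i)

theorem expLaurentTerm_eq_comp (c d z : ℂ) :
    expLaurentTerm c d z =
      (fun q : ℤ × ℤ => expCoeff c q.1 * z⁻¹ ^ q.1 * (expCoeff d q.2 * z ^ q.2)) ∘ shearEquiv :=
  rfl

theorem summable_norm_expLaurentTerm (c d z : ℂ) :
    Summable fun p => ‖expLaurentTerm c d z p‖ := by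
  rw [expLaurentTerm_eq_comp]
  exact shearEquiv.summable_iff.mpr <|
    (summable_norm_expCoeff_mul_zpow c z⁻¹).mul_norm (summable_norm_expCoeff_mul_zpow d z)

theorem hasSum_expLaurentTerm (c d z : ℂ) :
    HasSum (expLaurentTerm c d z) (exp (c / z + d * z)) := by
  rw [expLaurentTerm_eq_comp, shearEquiv.hasSum_iff, div_eq_mul_inv, exp_add]
  have hprod : Summable fun q : ℤ × ℤ =>
      expCoeff c q.1 * z⁻¹ ^ q.1 * (expCoeff d q.2 * z ^ q.2) :=
    summable_mul_of_summable_norm (f := fun n => expCoeff c n * z⁻¹ ^ n)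
      (g := fun n => expCoeff d n * z ^ n)
      (summable_norm_expCoeff_mul_zpow c z⁻¹) (summable_norm_expCoeff_mul_zpow d z)
  -- `(e :)` elaborates `e` before comparing it with the goal; the other way round times out.
  exact ((hasSum_expCoeff_mul_zpow c z⁻¹).mul (hasSum_expCoeff_mul_zpow d z) hprod :)

theorem hasSum_expLaurentTerm_fiber (c d : ℂ) {z : ℂ} (hz : z ≠ 0) (k : ℤ) :
    HasSum (fun i => expLaurentTerm c d z (k, i)) (expLaurentCoeff c d k * z ^ k) := by
  have hterm : ∀ i, expLaurentTerm c d z (k, i) = expCoeff c i * expCoeff d (k + i) * z ^ k := by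
    intro i
    simp only [expLaurentTerm, inv_zpow', zpow_add₀ hz, zpow_neg]
    field_simp
  have hsum := (summable_norm_expLaurentTerm c d z).of_norm.prod_factor k
  simp only [hterm] at hsum ⊢
  rw [expLaurentCoeff, ← tsum_mul_right]
  exact hsum.hasSum

theorem hasSum_expLaurentCoeff_mul_zpow (c d : ℂ) {z : ℂ} (hz : z ≠ 0) :
    HasSum (fun k => expLaurentCoeff c d k * z ^ k) (exp (c / z + d * z)) :=
  (hasSum_expLaurentTerm c d z).prod_fiberwise (hasSum_expLaurentTerm_fiber c d hz)

theorem summable_norm_expLaurentCoeff_mul_zpow (c d : ℂ) {z : ℂ} (hz : z ≠ 0) :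
    Summable fun k => ‖expLaurentCoeff c d k * z ^ k‖ := by
  have hnorm := summable_norm_expLaurentTerm c d z
  refine hnorm.prod.of_nonneg_of_le (fun _ => norm_nonneg _) fun k => ?_
  rw [← (hasSum_expLaurentTerm_fiber c d hz k).tsum_eq]
  exact norm_tsum_le_tsum_norm (hnorm.prod_factor k)

theorem T_eq_expLaurentCoeff (c d : ℝ) (x y : ℤ) {R : ℝ} (hR : 0 < R) :
    T c d x y R = expLaurentCoeff c d (y - x) := by
  have hR' : (R : ℂ) ≠ 0 := ofReal_ne_zero.mpr hR.ne'
  have ha : Summable fun n => ‖expLaurentCoeff c d n‖ * R ^ n := by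
    simpa [norm_zpow, abs_of_pos hR] using summable_norm_expLaurentCoeff_mul_zpow c d hR'
  rw [T, circleIntegral_zpow_mul_of_hasSum hR ha
    (fun w hw => hasSum_expLaurentCoeff_mul_zpow c d (ne_zero_of_mem_sphere_zero hR.ne' hw)),
    show -(x - y - 1) - 1 = y - x by ring, ← mul_assoc, inv_mul_cancel₀ (by simp [Real.pi_ne_zero]),
    one_mul]

theorem hasSum_T_mul_zpow (c d : ℝ) (x : ℤ) {R : ℝ} (hR : 0 < R) {z : ℂ} (hz : z ≠ 0) :
    HasSum (fun y => T c d x y R * z ^ (y - 1)) (exp (c / z + d * z) * z ^ (x - 1)) := by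
  have h := (Equiv.subRight x).hasSum_iff.mpr
    ((hasSum_expLaurentCoeff_mul_zpow c d hz).mul_right (z ^ (x - 1)))
  refine h.congr_fun fun y => ?_
  simp only [Function.comp_apply, Equiv.subRight_apply, T_eq_expLaurentCoeff c d x y hR, mul_assoc,
    ← zpow_add₀ hz]
  ring_nf

theorem summable_norm_T_mul_zpow (c d : ℝ) (x : ℤ) {R r : ℝ} (hR : 0 < R) (hr : 0 < r) :
    Summable fun y => ‖T c d x y R‖ * r ^ y := by
  have h := (Equiv.subRight x).summable_iff.mpr
    ((summable_norm_expLaurentCoeff_mul_zpow c d (ofReal_ne_zero.mpr hr.ne')).mul_left (r ^ x))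
  refine h.congr fun y => ?_
  simp only [Function.comp_apply, Equiv.subRight_apply, T_eq_expLaurentCoeff c d x y hR, norm_mul,
    norm_zpow, norm_real, Real.norm_of_nonneg hr.le, zpow_sub₀ hr.ne']
  field_simp

theorem norm_zpow_mul_le {G : ℂ → ℂ} {r C : ℝ} (hC : ∀ z ∈ sphere (0 : ℂ) r, ‖G z‖ ≤ C) (n : ℤ)
    {z : ℂ} (hz : z ∈ sphere (0 : ℂ) r) : ‖z ^ n * G z‖ ≤ r ^ n * C := by
  rw [mem_sphere_zero_iff_norm] at hz
  rw [norm_mul, norm_zpow, hz]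
  exact mul_le_mul_of_nonneg_left (hC _ (mem_sphere_zero_iff_norm.mpr hz)) (hz ▸ by positivity)

theorem hasSum_mul_circleIntegral_zpow_mul {t : ℤ → ℂ} {g G : ℂ → ℂ} {r : ℝ} (hr : 0 < r)
    (ht : Summable fun y => ‖t y‖ * r ^ y)
    (hg : ∀ z ∈ sphere (0 : ℂ) r, HasSum (fun y => t y * z ^ (y - 1)) (g z))
    (hG : ContinuousOn G (sphere 0 r)) :
    HasSum (fun y => t y * ∮ z in C(0, r), z ^ (y - 1) * G z) (∮ z in C(0, r), g z * G z) := by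
  obtain ⟨C, hC⟩ := (isCompact_sphere 0 r).exists_bound_of_continuousOn hG
  simp only [← circleIntegral.integral_const_mul]
  refine hasSum_circleIntegral hr.le (B := fun y => ‖t y‖ * r ^ y * (r⁻¹ * C))
    (fun y => continuousOn_const.mul ((continuousOn_zpow_sphere hr.ne' _).mul hG))
    (ht.mul_right _) (fun y z hz => ?_)
    (fun z hz => by simpa only [mul_assoc] using (hg z hz).mul_right (G z))
  calc ‖t y * (z ^ (y - 1) * G z)‖ ≤ ‖t y‖ * (r ^ (y - 1) * C) := by
        rw [norm_mul]; gcongr; exact norm_zpow_mul_le hC _ hz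
    _ = ‖t y‖ * r ^ y * (r⁻¹ * C) := by rw [zpow_sub_one₀ hr.ne']; ring

theorem summable_norm_mul_circleIntegral_zpow_mul {t : ℤ → ℂ} {G : ℂ → ℂ} {r : ℝ} (hr : 0 < r)
    (ht : Summable fun y => ‖t y‖ * r ^ y) (hG : ContinuousOn G (sphere 0 r)) :
    Summable fun y => ‖t y * ∮ z in C(0, r), z ^ (y - 1) * G z‖ := by
  obtain ⟨C, hC⟩ := (isCompact_sphere 0 r).exists_bound_of_continuousOn hG
  refine (ht.mul_right (2 * π * C)).of_nonneg_of_le (fun _ => norm_nonneg _) fun y => ?_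
  calc ‖t y * ∮ z in C(0, r), z ^ (y - 1) * G z‖ ≤ ‖t y‖ * (2 * π * r * (r ^ (y - 1) * C)) := by
        rw [norm_mul]; gcongr
        exact circleIntegral.norm_integral_le_of_norm_le_const hr.le
          fun z hz => norm_zpow_mul_le hC _ hz
    _ = ‖t y‖ * r ^ y * (2 * π * C) := by rw [zpow_sub_one₀ hr.ne']; field_simp

theorem prod_one_sub_mul_ne_zero {ι : Type*} (s : Finset ι) {u : ι → ℝ} {r : ℝ} (hr : 0 < r)
    (hu : ∀ j ∈ s, r < 1 / u j) {z : ℂ} (hz : z ∈ sphere (0 : ℂ) r) :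
    ∏ j ∈ s, (1 - (u j : ℂ) * z) ≠ 0 := by
  refine Finset.prod_ne_zero_iff.mpr fun j hj => sub_ne_zero.mpr fun h => ?_
  have hu0 : 0 < u j := one_div_pos.mp (hr.trans (hu j hj))
  refine ((lt_div_iff₀ hu0).mp (hu j hj)).ne ?_
  rw [mem_sphere_zero_iff_norm] at hz
  simpa [norm_mul, hz, abs_of_pos hu0, mul_comm] using (congrArg norm h).symm

theorem stmt15_general (N : ℕ) (v : ℕ → ℝ)
    (r : ℝ) (hr : 0 < r) (hrv : ∀ j, 1 ≤ j → j ≤ N → r < 1 / v j)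
    (r' : ℝ) (hr' : 0 < r')
    (a b c d : ℝ) (k l : ℕ) (hlN : l ≤ N)
    (x : ℤ) :
    Summable (fun y : ℤ => ‖T c d x y r' * F N v k l y a b r‖) ∧
    ∑' y : ℤ, T c d x y r' * F N v k l y a b r
      = F N v k l x (a + c) (b + d) r := by
  set P : ℂ → ℂ := fun z => ∏ i ∈ Finset.range (k - 1), (1 - (v (N - i) : ℂ) * z)
  set Q : ℂ → ℂ := fun z => ∏ j ∈ Finset.range (l - 1), (1 - (v (N - j) : ℂ) * z)
  have hQ : ∀ z ∈ sphere (0 : ℂ) r, Q z ≠ 0 := fun z =>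
    prod_one_sub_mul_ne_zero _ hr fun j hj => hrv _ (by simp at hj; omega) (by omega)
  have hG : ContinuousOn (fun z => exp (b * z + a / z) * (P z / Q z)) (sphere 0 r) :=
    .mul (.cexp (.add (by fun_prop) (continuousOn_const.div continuousOn_id
      fun z hz => ne_zero_of_mem_sphere_zero hr.ne' hz)))
      (.div (by fun_prop) (by fun_prop) hQ)
  have hF : ∀ y (a' b' : ℝ), F N v k l y a' b' r = (2 * (π : ℂ) * I)⁻¹ *
      ∮ z in C(0, r), z ^ (y - 1) * (exp (b' * z + a' / z) * (P z / Q z)) := by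
    intro y a' b'
    simp only [F, P, Q, mul_assoc, mul_div_assoc]
  have hT := summable_norm_T_mul_zpow c d x hr' hr
  simp only [hF, mul_left_comm (T c d x _ r')]
  refine ⟨by simpa only [norm_mul] using
    (summable_norm_mul_circleIntegral_zpow_mul hr hT hG).mul_left ‖(2 * (π : ℂ) * I)⁻¹‖, ?_⟩
  rw [((hasSum_mul_circleIntegral_zpow_mul hr hT (fun z hz => hasSum_T_mul_zpow c d x hr'
    (ne_zero_of_mem_sphere_zero hr.ne' hz)) hG).mul_left _).tsum_eq]
  congr 1
  refine circleIntegral.integral_congr hr.le fun z _ => ?_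
  simp only [show ((b + d : ℝ) : ℂ) * z + ((a + c : ℝ) : ℂ) / z = (c / z + d * z) + (b * z + a / z)
    by push_cast; ring, exp_add]
  ring

/-- `∑_{y∈ℤ} T_{c,d}(x,y) F_{k,l}(y,a,b) = F_{k,l}(x,a+c,b+d)`,
the series converging absolutely. -/
theorem stmt15 (N : ℕ) (hN : 1 ≤ N) (v : ℕ → ℝ)
    (hv : ∀ i, 1 ≤ i → i ≤ N → 0 < v i)
    (r : ℝ) (hr : 0 < r) (hrv : ∀ j, 1 ≤ j → j ≤ N → r < 1 / v j)
    (r' : ℝ) (hr' : 0 < r')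
    (a b c d : ℝ) (k l : ℕ) (hk1 : 1 ≤ k) (hkN : k ≤ N) (hl1 : 1 ≤ l) (hlN : l ≤ N)
    (x : ℤ) :
    Summable (fun y : ℤ => ‖T c d x y r' * F N v k l y a b r‖) ∧
    ∑' y : ℤ, T c d x y r' * F N v k l y a b r
      = F N v k l x (a + c) (b + d) r :=
  stmt15_general N v r hr hrv r' hr' a b c d k l hlN x
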